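/- Let κ ∈ (0,1). If U₁ and U₂ are both odd zero-up ground states for parameter κ, then U₁(x) = U₂(x) for all x ∈ ℝ. -/

import Mathlib

open Real MeasureTheory Set

noncomputable section

/-- An odd zero-up ground state for parameter `κ`: a `2π`-periodic, odd, twice
continuously differentiable function `U : ℝ → ℝ` satisfying
`κ² U'' + U − U³ = 0` on `ℝ`, with `U' > 0` on `[0, π/2)` and `U' < 0` on `(π/2, π]`. -/
def IsOddZeroUpGroundState (κ : ℝ) (U : ℝ → ℝ) : Prop :=
  ContDiff ℝ 2 U ∧
  Function.Periodic U (2 * π) ∧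
  (∀ x : ℝ, U (-x) = - U x) ∧
  (∀ x : ℝ, κ ^ 2 * deriv (deriv U) x + U x - U x ^ 3 = 0) ∧
  (∀ x ∈ Set.Ico (0 : ℝ) (π / 2), 0 < deriv U x) ∧
  (∀ x ∈ Set.Ioc (π / 2) π, deriv U x < 0)

/-- The Allen–Cahn energy with diffusion coefficient `κ`. -/
def energy (κ : ℝ) (u : ℝ → ℝ) : ℝ :=
  ∫ x in (-π)..π, (κ ^ 2 / 2 * (deriv u x) ^ 2 + (1 - u x ^ 2) ^ 2 / 4)

/-- The `L²` norm over one period `(-π, π)`. -/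
def L2norm (f : ℝ → ℝ) : ℝ := Real.sqrt (∫ x in (-π)..π, (f x) ^ 2)

/-- The `H¹` norm over one period `(-π, π)`. -/
def H1norm (f : ℝ → ℝ) : ℝ := Real.sqrt (L2norm f ^ 2 + L2norm (deriv f) ^ 2)

/-!
Along a solution of `κ² u'' = u³ - u` the quantity `κ²/2 · u'² - W(u)`, with the double well
`W(u) = (1 - u²)²/4`, is conserved, so a ground state satisfies `κ²/2 · U'² = W(U) - W(U(π/2))`.
If `U₁` had the larger level `W(U(π/2))`, then `U₁' < U₂'` wherever `U₁ = U₂` on `[0, π/2]`, so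
`U₁ < U₂` on `(0, π/2]`; the Wronskian `U₁'U₂ - U₁U₂'`, with derivative `U₁U₂(U₁² - U₂²)/κ²`,
would then strictly decrease on `[0, π/2]` although it vanishes at both ends. So the levels agree,
hence `U₁'(0) = U₂'(0)`, and uniqueness for the ODE gives `U₁ = U₂`.
-/

open Filter Topology

theorem HasDerivAt.eventually_nhdsLT_lt {f : ℝ → ℝ} {f' x : ℝ} (hf : HasDerivAt f f' x)
    (hf' : 0 < f') : ∀ᶠ y in 𝓝[<] x, f y < f x := by
  have hslope : Tendsto (slope f x) (𝓝[<] x) (𝓝 f') :=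
    (hasDerivAt_iff_tendsto_slope.mp hf).mono_left (nhdsWithin_mono _ fun y hy => ne_of_lt hy)
  filter_upwards [hslope.eventually (lt_mem_nhds hf'), self_mem_nhdsWithin] with y hpos hy
  have hdiff := sub_smul_slope f x y
  rw [smul_eq_mul, vsub_eq_sub] at hdiff
  linarith [mul_neg_of_neg_of_pos (sub_neg.mpr hy) hpos]

theorem image_lt_of_deriv_lt_deriv_boundary {f f' B B' : ℝ → ℝ} {a b : ℝ}
    (hf : ∀ x ∈ Icc a b, HasDerivAt f (f' x) x) (hB : ∀ x ∈ Icc a b, HasDerivAt B (B' x) x)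
    (ha : f a ≤ B a) (bound : ∀ x ∈ Icc a b, f x = B x → f' x < B' x) :
    ∀ ⦃x⦄, x ∈ Ioc a b → f x < B x := by
  have hle : ∀ ⦃x⦄, x ∈ Icc a b → f x ≤ B x :=
    image_le_of_deriv_right_lt_deriv_boundary'
      (HasDerivAt.continuousOn hf) (fun x hx => (hf x (Ico_subset_Icc_self hx)).hasDerivWithinAt)
      ha (HasDerivAt.continuousOn hB)
      (fun x hx => (hB x (Ico_subset_Icc_self hx)).hasDerivWithinAt)
      (fun x hx => bound x (Ico_subset_Icc_self hx))
  intro x hx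
  refine (hle (Ioc_subset_Icc_self hx)).lt_of_ne fun heq => ?_
  have hxab := Ioc_subset_Icc_self hx
  have hgap := ((hB x hxab).sub (hf x hxab)).eventually_nhdsLT_lt
    (sub_pos.mpr (bound x hxab heq))
  obtain ⟨y, hy, hyx⟩ := (hgap.and (Ioo_mem_nhdsLT hx.1)).exists
  have hgap_y : B y - f y < B x - f x := hy
  linarith [hle ⟨hyx.1.le, hyx.2.le.trans hx.2⟩]

theorem ODE_solution_unique_univ_of_contDiff {E : Type*} [NormedAddCommGroup E]
    [NormedSpace ℝ E] [ProperSpace E] {v : E → E} (hv : ContDiff ℝ 1 v) {f g : ℝ → E}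
    {t₀ : ℝ} (hf : ∀ t, HasDerivAt f (v (f t)) t) (hg : ∀ t, HasDerivAt g (v (g t)) t)
    (heq : f t₀ = g t₀) : f = g := by
  ext1 t
  set r := |t - t₀| + 1
  have hcont : ∀ γ : ℝ → E, (∀ t, HasDerivAt γ (v (γ t)) t) → Continuous γ :=
    fun γ hγ => continuous_iff_continuousAt.2 fun t => (hγ t).continuousAt
  -- on a compact time interval both trajectories stay in a ball, where `v` is Lipschitz
  obtain ⟨R, hR⟩ := ((isCompact_closedBall t₀ r).image (hcont f hf) |>.union
    ((isCompact_closedBall t₀ r).image (hcont g hg))).isBounded.subset_closedBall 0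
  obtain ⟨K, hK⟩ := hv.contDiffOn.exists_lipschitzOnWith one_ne_zero (convex_closedBall 0 R)
    (isCompact_closedBall 0 R)
  have hball : Ioo (t₀ - r) (t₀ + r) ⊆ Metric.closedBall t₀ r := by
    rw [← Real.ball_eq_Ioo]
    exact Metric.ball_subset_closedBall
  refine ODE_solution_unique_of_mem_Ioo (v := fun _ => v) (s := fun _ => Metric.closedBall 0 R)
    (fun _ _ => hK) (a := t₀ - r) (b := t₀ + r) ?_
    (fun s hs => ⟨hf s, hR (Or.inl ⟨s, hball hs, rfl⟩)⟩)
    (fun s hs => ⟨hg s, hR (Or.inr ⟨s, hball hs, rfl⟩)⟩) heq ?_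
  all_goals constructor <;> linarith [le_abs_self (t - t₀), neg_abs_le (t - t₀)]

def doubleWell (u : ℝ) : ℝ := (1 - u ^ 2) ^ 2 / 4

def SolvesAllenCahn (κ : ℝ) (u : ℝ → ℝ) : Prop :=
  ContDiff ℝ 2 u ∧ ∀ x, κ ^ 2 * deriv (deriv u) x + u x - u x ^ 3 = 0

namespace SolvesAllenCahn

variable {κ : ℝ} {u u₁ u₂ : ℝ → ℝ}

theorem differentiable (hu : SolvesAllenCahn κ u) : Differentiable ℝ u :=
  hu.1.differentiable (by norm_num)

theorem hasDerivAt_deriv (hu : SolvesAllenCahn κ u) (hκ : κ ≠ 0) (x : ℝ) :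
    HasDerivAt (deriv u) ((u x ^ 3 - u x) / κ ^ 2) x := by
  refine (hu.1.differentiable_deriv_two x).hasDerivAt.congr_deriv ?_
  exact eq_div_of_mul_eq (pow_ne_zero 2 hκ) (by linarith [hu.2 x])

theorem energy_eq (hu : SolvesAllenCahn κ u) (x y : ℝ) :
    κ ^ 2 / 2 * deriv u x ^ 2 - doubleWell (u x) =
      κ ^ 2 / 2 * deriv u y ^ 2 - doubleWell (u y) := by
  have hderiv : ∀ x, HasDerivAt (fun x => κ ^ 2 / 2 * deriv u x ^ 2 - doubleWell (u x)) 0 x := by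
    intro x
    have hu' := (hu.differentiable x).hasDerivAt
    have hu'' := (hu.1.differentiable_deriv_two x).hasDerivAt
    refine (((hu''.fun_pow 2).const_mul (κ ^ 2 / 2)).sub
      ((((hu'.fun_pow 2).const_sub 1).pow 2).div_const 4)).congr_deriv ?_
    linear_combination deriv u x * hu.2 x
  exact is_const_of_deriv_eq_zero (fun x => (hderiv x).differentiableAt)
    (fun x => (hderiv x).deriv) x y

theorem wronskian_hasDerivAt (hu₁ : SolvesAllenCahn κ u₁) (hu₂ : SolvesAllenCahn κ u₂)
    (hκ : κ ≠ 0) (x : ℝ) :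
    HasDerivAt (fun x => deriv u₁ x * u₂ x - u₁ x * deriv u₂ x)
      (u₁ x * u₂ x * (u₁ x ^ 2 - u₂ x ^ 2) / κ ^ 2) x := by
  refine (((hu₁.hasDerivAt_deriv hκ x).mul (hu₂.differentiable x).hasDerivAt).sub
    ((hu₁.differentiable x).hasDerivAt.mul (hu₂.hasDerivAt_deriv hκ x))).congr_deriv ?_
  ring

theorem eq_of_eq_of_deriv_eq (hu₁ : SolvesAllenCahn κ u₁) (hu₂ : SolvesAllenCahn κ u₂)
    (hκ : κ ≠ 0) {t₀ : ℝ} (h₀ : u₁ t₀ = u₂ t₀) (h₁ : deriv u₁ t₀ = deriv u₂ t₀) : u₁ = u₂ := by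
  have hv : ContDiff ℝ 1 fun p : ℝ × ℝ => (p.2, (p.1 ^ 3 - p.1) / κ ^ 2) := by fun_prop
  have hphase : ∀ {u : ℝ → ℝ}, SolvesAllenCahn κ u → ∀ t,
      HasDerivAt (fun t => (u t, deriv u t)) (deriv u t, (u t ^ 3 - u t) / κ ^ 2) t :=
    fun hu t => (hu.differentiable t).hasDerivAt.prodMk (hu.hasDerivAt_deriv hκ t)
  have hphase_eq := ODE_solution_unique_univ_of_contDiff hv (hphase hu₁) (hphase hu₂)
    (Prod.ext h₀ h₁)
  exact funext fun t => congrArg Prod.fst (congrFun hphase_eq t)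

end SolvesAllenCahn

namespace IsOddZeroUpGroundState

variable {κ : ℝ} {U U₁ U₂ : ℝ → ℝ}

theorem solvesAllenCahn (hU : IsOddZeroUpGroundState κ U) : SolvesAllenCahn κ U :=
  ⟨hU.1, hU.2.2.2.1⟩

theorem map_zero (hU : IsOddZeroUpGroundState κ U) : U 0 = 0 := by
  have h := hU.2.2.1 0
  rw [neg_zero] at h
  linarith

theorem deriv_nonneg (hU : IsOddZeroUpGroundState κ U) :
    ∀ x ∈ Icc 0 (π / 2), 0 ≤ deriv U x := by
  rw [← closure_Ico (by positivity : (0 : ℝ) ≠ π / 2)]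
  exact closure_minimal (fun x hx => (hU.2.2.2.2.1 x hx).le)
    (isClosed_le continuous_const (hU.1.continuous_deriv (by norm_num)))

theorem deriv_pi_div_two (hU : IsOddZeroUpGroundState κ U) : deriv U (π / 2) = 0 := by
  have hπ : π / 2 < π := by linarith [pi_pos]
  have hle : π / 2 ∈ {x | deriv U x ≤ 0} := by
    refine closure_minimal (fun x hx => (hU.2.2.2.2.2 x hx).le)
      (isClosed_le (hU.1.continuous_deriv (by norm_num)) continuous_const) ?_
    rw [closure_Ioc hπ.ne]
    exact ⟨le_rfl, hπ.le⟩
  exact le_antisymm hle (hU.deriv_nonneg _ ⟨by positivity, le_rfl⟩)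

theorem deriv_zero_pos (hU : IsOddZeroUpGroundState κ U) : 0 < deriv U 0 :=
  hU.2.2.2.2.1 0 ⟨le_rfl, by positivity⟩

theorem pos_of_mem_Ioc (hU : IsOddZeroUpGroundState κ U) {x : ℝ} (hx : x ∈ Ioc 0 (π / 2)) :
    0 < U x := by
  have hmono : StrictMonoOn U (Icc 0 (π / 2)) :=
    strictMonoOn_of_deriv_pos (convex_Icc _ _) hU.1.continuous.continuousOn
      fun y hy => hU.2.2.2.2.1 y (Ioo_subset_Ico_self (by rwa [interior_Icc] at hy))
  simpa [hU.map_zero] using hmono ⟨le_rfl, by positivity⟩ (Ioc_subset_Icc_self hx) hx.1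

theorem energy_eq (hU : IsOddZeroUpGroundState κ U) (x : ℝ) :
    κ ^ 2 / 2 * deriv U x ^ 2 = doubleWell (U x) - doubleWell (U (π / 2)) := by
  have h := hU.solvesAllenCahn.energy_eq x (π / 2)
  rw [hU.deriv_pi_div_two] at h
  linarith

theorem deriv_lt_deriv_of_eq (hU₁ : IsOddZeroUpGroundState κ U₁)
    (hU₂ : IsOddZeroUpGroundState κ U₂)
    (hlt : doubleWell (U₂ (π / 2)) < doubleWell (U₁ (π / 2))) {x : ℝ} (hx : x ∈ Icc 0 (π / 2))
    (heq : U₁ x = U₂ x) : deriv U₁ x < deriv U₂ x := by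
  have hsq : κ ^ 2 / 2 * deriv U₁ x ^ 2 < κ ^ 2 / 2 * deriv U₂ x ^ 2 := by
    rw [hU₁.energy_eq, hU₂.energy_eq, heq]
    linarith
  exact lt_of_pow_lt_pow_left₀ 2 (hU₂.deriv_nonneg x hx)
    (lt_of_mul_lt_mul_left hsq (by positivity))

theorem lt_of_doubleWell_lt (hU₁ : IsOddZeroUpGroundState κ U₁)
    (hU₂ : IsOddZeroUpGroundState κ U₂)
    (hlt : doubleWell (U₂ (π / 2)) < doubleWell (U₁ (π / 2))) :
    ∀ ⦃x⦄, x ∈ Ioc 0 (π / 2) → U₁ x < U₂ x :=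
  image_lt_of_deriv_lt_deriv_boundary
    (fun x _ => (hU₁.solvesAllenCahn.differentiable x).hasDerivAt)
    (fun x _ => (hU₂.solvesAllenCahn.differentiable x).hasDerivAt)
    (by rw [hU₁.map_zero, hU₂.map_zero]) fun _ hx heq => hU₁.deriv_lt_deriv_of_eq hU₂ hlt hx heq

theorem doubleWell_pi_div_two_le (hκ : κ ≠ 0) (hU₁ : IsOddZeroUpGroundState κ U₁)
    (hU₂ : IsOddZeroUpGroundState κ U₂) :
    doubleWell (U₁ (π / 2)) ≤ doubleWell (U₂ (π / 2)) := by
  by_contra! hlt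
  have hW := hU₁.solvesAllenCahn.wronskian_hasDerivAt hU₂.solvesAllenCahn hκ
  have hanti : StrictAntiOn (fun x => deriv U₁ x * U₂ x - U₁ x * deriv U₂ x) (Icc 0 (π / 2)) := by
    refine strictAntiOn_of_deriv_neg (convex_Icc _ _)
      (HasDerivAt.continuousOn fun x _ => hW x) fun x hx => ?_
    rw [interior_Icc] at hx
    have hx' : x ∈ Ioc 0 (π / 2) := Ioo_subset_Ioc_self hx
    have h₁ := hU₁.pos_of_mem_Ioc hx'
    have h₁₂ := hU₁.lt_of_doubleWell_lt hU₂ hlt hx'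
    rw [(hW x).deriv]
    apply div_neg_of_neg_of_pos _ (pow_two_pos_of_ne_zero hκ)
    exact mul_neg_of_pos_of_neg (mul_pos h₁ (h₁.trans h₁₂)) (by nlinarith)
  have := hanti ⟨le_rfl, by positivity⟩ ⟨by positivity, le_rfl⟩ (by positivity)
  simp [hU₁.map_zero, hU₂.map_zero, hU₁.deriv_pi_div_two, hU₂.deriv_pi_div_two] at this

theorem deriv_zero_eq_of_doubleWell_eq (hκ : κ ≠ 0) (hU₁ : IsOddZeroUpGroundState κ U₁)
    (hU₂ : IsOddZeroUpGroundState κ U₂)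
    (h : doubleWell (U₁ (π / 2)) = doubleWell (U₂ (π / 2))) : deriv U₁ 0 = deriv U₂ 0 := by
  have hsq : deriv U₁ 0 ^ 2 = deriv U₂ 0 ^ 2 := by
    have h₁ := hU₁.energy_eq 0
    have h₂ := hU₂.energy_eq 0
    rw [hU₁.map_zero, h] at h₁
    rw [hU₂.map_zero] at h₂
    exact mul_left_cancel₀ (by simpa using hκ) (h₁.trans h₂.symm)
  exact (pow_left_inj₀ hU₁.deriv_zero_pos.le hU₂.deriv_zero_pos.le two_ne_zero).mp hsq

end IsOddZeroUpGroundState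

theorem ground_state_unique_general (κ : ℝ) (hκ : 0 < κ)
    (U₁ U₂ : ℝ → ℝ) (hU₁ : IsOddZeroUpGroundState κ U₁)
    (hU₂ : IsOddZeroUpGroundState κ U₂) :
    ∀ x : ℝ, U₁ x = U₂ x := by
  have hlevel : doubleWell (U₁ (π / 2)) = doubleWell (U₂ (π / 2)) :=
    (hU₁.doubleWell_pi_div_two_le hκ.ne' hU₂).antisymm (hU₂.doubleWell_pi_div_two_le hκ.ne' hU₁)
  have hsame := hU₁.solvesAllenCahn.eq_of_eq_of_deriv_eq hU₂.solvesAllenCahn hκ.ne'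
    (by rw [hU₁.map_zero, hU₂.map_zero]) (hU₁.deriv_zero_eq_of_doubleWell_eq hκ.ne' hU₂ hlevel)
  exact congrFun hsame

/-- uniqueness of the odd zero-up ground state for each `κ ∈ (0,1)`. -/
theorem ground_state_unique (κ : ℝ) (hκ : 0 < κ) (hκ1 : κ < 1)
    (U₁ U₂ : ℝ → ℝ) (hU₁ : IsOddZeroUpGroundState κ U₁)
    (hU₂ : IsOddZeroUpGroundState κ U₂) :
    ∀ x : ℝ, U₁ x = U₂ x :=
  ground_state_unique_general κ hκ U₁ U₂ hU₁ hU₂
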